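/- Let α, β ∈ π. Writing J¹_{αβ} ⊗ J²_{β⁻¹} = J^R_{αβ,β⁻¹}, one has Δ_{α,β}(J¹_{αβ}) · I^R_{α,β} · (1_α ⊗ S_{β⁻¹}(J²_{β⁻¹})) = 1_α ⊗ 1_β. -/

import Mathlib

open scoped TensorProduct
open TensorProduct

universe u v
set_option maxHeartbeats 1000000

section QH
variable (k : Type u) [Field k] {π : Type v} [Group π]
variable (H : π → Type u) [∀ a, Ring (H a)] [∀ a, Algebra k (H a)]

/-- Transport along equality of group elements, as a `k`-linear map. -/
def castL {a b : π} (e : a = b) : H a →ₗ[k] H b := by subst e; exact LinearMap.id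

/-- Transport along equality of group elements, as a `k`-algebra map. -/
def castA {a b : π} (e : a = b) : H a →ₐ[k] H b := by subst e; exact AlgHom.id k _

/-- A quasi-Hopf `π`-coalgebra (quasi-Turaev group coalgebra without the crossing):
a family of `k`-algebras `{H α}` with comultiplications `Δ_{α,β}`, counit `ε`,
invertible associators `Φ_{α,β,γ}`, antipodes `S_α` and elements `p_α, q_α`. -/
structure QuasiHopfGCoalgebra where
  /-- comultiplication -/
  Δ : ∀ a b : π, H (a * b) →ₐ[k] (H a ⊗[k] H b)
  /-- counit -/
  ε : H 1 →ₐ[k] k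
  /-- the associator `Φ_{α,β,γ} ∈ H_α ⊗ H_β ⊗ H_γ` -/
  Φ : ∀ a b c : π, H a ⊗[k] (H b ⊗[k] H c)
  /-- the inverse associator -/
  Φinv : ∀ a b c : π, H a ⊗[k] (H b ⊗[k] H c)
  Φ_mul_Φinv : ∀ a b c : π, Φ a b c * Φinv a b c = 1
  Φinv_mul_Φ : ∀ a b c : π, Φinv a b c * Φ a b c = 1
  /-- the antipode, a family of bijective `k`-linear maps -/
  S : ∀ a : π, H a ≃ₗ[k] H a⁻¹
  S_one : ∀ a : π, S a 1 = 1
  /-- the antipode is anti-multiplicative -/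
  S_mul : ∀ (a : π) (x y : H a), S a (x * y) = S a y * S a x
  p : ∀ a : π, H a
  q : ∀ a : π, H a
  /-- quasi-coassociativity:
  `(id ⊗ Δ_{β,γ})Δ_{α,βγ}(h) ⬝ Φ_{α,β,γ} = Φ_{α,β,γ} ⬝ (Δ_{α,β} ⊗ id)Δ_{αβ,γ}(h)` -/
  coassoc : ∀ (a b c : π) (h : H (a * b * c)),
    (TensorProduct.map LinearMap.id (Δ b c).toLinearMap)
        ((Δ a (b * c)) (castL k H (mul_assoc a b c) h)) * Φ a b c
      = Φ a b c *
        (TensorProduct.assoc k (H a) (H b) (H c))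
          ((TensorProduct.map (Δ a b).toLinearMap LinearMap.id) ((Δ (a * b) c) h))
  /-- right counit law `(id ⊗ ε)Δ_{α,1} = id` -/
  counit_right : ∀ (a : π) (h : H a),
    (TensorProduct.rid k (H a))
      ((TensorProduct.map LinearMap.id (ε : H 1 →ₗ[k] k))
        ((Δ a 1) (castL k H (mul_one a).symm h))) = h
  /-- left counit law `(ε ⊗ id)Δ_{1,α} = id` -/
  counit_left : ∀ (a : π) (h : H a),
    (TensorProduct.lid k (H a))
      ((TensorProduct.map (ε : H 1 →ₗ[k] k) LinearMap.id)
        ((Δ 1 a) (castL k H (one_mul a).symm h))) = h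
  /-- the pentagon identity -/
  pentagon : ∀ a b c d : π,
    ((1 : H a) ⊗ₜ[k] Φ b c d) *
      (TensorProduct.map LinearMap.id
          ((TensorProduct.assoc k (H b) (H c) (H d)).toLinearMap ∘ₗ
            TensorProduct.map (Δ b c).toLinearMap LinearMap.id)
        (Φ a (b * c) d)) *
      ((TensorProduct.map LinearMap.id (TensorProduct.assoc k (H b) (H c) (H d)).toLinearMap)
        ((TensorProduct.assoc k (H a) (H b ⊗[k] H c) (H d)) ((Φ a b c) ⊗ₜ[k] (1 : H d))))
    = (TensorProduct.map LinearMap.id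
          (TensorProduct.map LinearMap.id (Δ c d).toLinearMap) (Φ a b (c * d))) *
      ((TensorProduct.assoc k (H a) (H b) (H c ⊗[k] H d))
        ((TensorProduct.map (Δ a b).toLinearMap LinearMap.id) (Φ (a * b) c d)))
  /-- normalization `(id ⊗ ε ⊗ id)(Φ_{α,1,β}) = 1 ⊗ 1` -/
  Φ_normal : ∀ a b : π,
    (TensorProduct.map LinearMap.id
      ((TensorProduct.lid k (H b)).toLinearMap ∘ₗ
        TensorProduct.map (ε : H 1 →ₗ[k] k) LinearMap.id) (Φ a 1 b)) = (1 : H a ⊗[k] H b)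
  /-- `S_α(h₁) p_{α⁻¹} h₂ = ε(h) p_{α⁻¹}` for `h ∈ H_1` -/
  antipode_p : ∀ (a : π) (h : H 1),
    (LinearMap.mul' k (H a⁻¹) ∘ₗ
        TensorProduct.map (LinearMap.mulRight k (p a⁻¹) ∘ₗ (S a).toLinearMap) LinearMap.id)
      ((Δ a a⁻¹) (castL k H (mul_inv_cancel a).symm h)) = ε h • p a⁻¹
  /-- `h₁ q_α S_{α⁻¹}(h₂) = ε(h) q_α` for `h ∈ H_1` -/
  antipode_q : ∀ (a : π) (h : H 1),
    (LinearMap.mul' k (H a) ∘ₗ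
        TensorProduct.map (LinearMap.mulRight k (q a))
          (castL k H (inv_inv a) ∘ₗ (S a⁻¹).toLinearMap))
      ((Δ a a⁻¹) (castL k H (mul_inv_cancel a).symm h)) = ε h • q a
  /-- `Y¹_α q_α S_{α⁻¹}(Y²_{α⁻¹}) p_α Y³_α = 1_α` where `Φ_{α,α⁻¹,α} = Y¹ ⊗ Y² ⊗ Y³` -/
  antipode_Φ : ∀ a : π,
    (LinearMap.mul' k (H a) ∘ₗ
      TensorProduct.map (LinearMap.mulRight k (q a))
        (LinearMap.mul' k (H a) ∘ₗ
          TensorProduct.map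
            (LinearMap.mulRight k (p a) ∘ₗ castL k H (inv_inv a) ∘ₗ (S a⁻¹).toLinearMap)
            LinearMap.id))
      (Φ a a⁻¹ a) = 1
  /-- `S_{α⁻¹}(y¹_{α⁻¹}) p_α y²_α q_α S_{α⁻¹}(y³_{α⁻¹}) = 1_α`
  where `Φ⁻¹_{α⁻¹,α,α⁻¹} = y¹ ⊗ y² ⊗ y³` -/
  antipode_Φinv : ∀ a : π,
    (LinearMap.mul' k (H a) ∘ₗ
      TensorProduct.map
        (LinearMap.mulRight k (p a) ∘ₗ castL k H (inv_inv a) ∘ₗ (S a⁻¹).toLinearMap)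
        (LinearMap.mul' k (H a) ∘ₗ
          TensorProduct.map (LinearMap.mulRight k (q a))
            (castL k H (inv_inv a) ∘ₗ (S a⁻¹).toLinearMap)))
      (Φinv a⁻¹ a a⁻¹) = 1

namespace QuasiHopfGCoalgebra
variable {k H}
variable (T : QuasiHopfGCoalgebra k H)

/-- `I^R_{α,β} = y¹_α ⊗ y²_β q_β S_{β⁻¹}(y³_{β⁻¹})` where `Φ⁻¹_{α,β,β⁻¹} = y¹ ⊗ y² ⊗ y³` -/
noncomputable def IR (a b : π) : H a ⊗[k] H b :=
  TensorProduct.map LinearMap.id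
    (LinearMap.mul' k (H b) ∘ₗ
      TensorProduct.map (LinearMap.mulRight k (T.q b))
        (castL k H (inv_inv b) ∘ₗ (T.S b⁻¹).toLinearMap))
    (T.Φinv a b b⁻¹)

/-- `J^R_{α,β} = Y¹_α ⊗ S_β⁻¹(p_{β⁻¹} Y³_{β⁻¹}) Y²_β` where `Φ_{α,β,β⁻¹} = Y¹ ⊗ Y² ⊗ Y³` -/
noncomputable def JR (a b : π) : H a ⊗[k] H b :=
  TensorProduct.map LinearMap.id
    (LinearMap.mul' k (H b) ∘ₗ
      TensorProduct.map ((T.S b).symm.toLinearMap ∘ₗ LinearMap.mulLeft k (T.p b⁻¹))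
          LinearMap.id ∘ₗ
        (TensorProduct.comm k (H b) (H b⁻¹)).toLinearMap)
    (T.Φ a b b⁻¹)

/-- `I^L_{α,β} = Y²_α S_α⁻¹(Y¹_{α⁻¹} q_{α⁻¹}) ⊗ Y³_β` where `Φ_{α⁻¹,α,β} = Y¹ ⊗ Y² ⊗ Y³` -/
noncomputable def IL (a b : π) : H a ⊗[k] H b :=
  TensorProduct.map (LinearMap.mul' k (H a)) LinearMap.id
    ((TensorProduct.assoc k (H a) (H a) (H b)).symm
      ((TensorProduct.leftComm k (H a) (H a) (H b))
        (TensorProduct.map ((T.S a).symm.toLinearMap ∘ₗ LinearMap.mulRight k (T.q a⁻¹))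
          LinearMap.id (T.Φ a⁻¹ a b))))

/-- `J^L_{α,β} = S_{α⁻¹}(y¹_{α⁻¹}) p_α y²_α ⊗ y³_β` where `Φ⁻¹_{α⁻¹,α,β} = y¹ ⊗ y² ⊗ y³` -/
noncomputable def JL (a b : π) : H a ⊗[k] H b :=
  TensorProduct.map (LinearMap.mul' k (H a)) LinearMap.id
    ((TensorProduct.assoc k (H a) (H a) (H b)).symm
      (TensorProduct.map
        (LinearMap.mulRight k (T.p a) ∘ₗ castL k H (inv_inv a) ∘ₗ (T.S a⁻¹).toLinearMap)
        LinearMap.id (T.Φinv a⁻¹ a b)))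

/-- the map `x ⊗ y ↦ Δ_{α,β}(x) ⬝ I^R_{α,β} ⬝ (1_α ⊗ S_{β⁻¹}(y))` -/
noncomputable def lmapIR (a b : π) : (H (a * b) ⊗[k] H b⁻¹) →ₗ[k] (H a ⊗[k] H b) :=
  LinearMap.mul' k (H a ⊗[k] H b) ∘ₗ
    TensorProduct.map
      (LinearMap.mulRight k (T.IR a b) ∘ₗ (T.Δ a b).toLinearMap)
      (TensorProduct.mk k (H a) (H b) 1 ∘ₗ castL k H (inv_inv b) ∘ₗ (T.S b⁻¹).toLinearMap)

/-- the map `x ⊗ y ↦ (1_α ⊗ S_β⁻¹(y)) ⬝ J^R_{α,β} ⬝ Δ_{α,β}(x)` -/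
noncomputable def lmapJR (a b : π) : (H (a * b) ⊗[k] H b⁻¹) →ₗ[k] (H a ⊗[k] H b) :=
  LinearMap.mul' k (H a ⊗[k] H b) ∘ₗ
    TensorProduct.map
      (TensorProduct.mk k (H a) (H b) 1 ∘ₗ (T.S b).symm.toLinearMap)
      (LinearMap.mulLeft k (T.JR a b) ∘ₗ (T.Δ a b).toLinearMap) ∘ₗ
    (TensorProduct.comm k (H (a * b)) (H b⁻¹)).toLinearMap

/-- the map `x ⊗ y ↦ Δ_{α,β}(y) ⬝ I^L_{α,β} ⬝ (S_α⁻¹(x) ⊗ 1_β)` -/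
noncomputable def lmapIL (a b : π) : (H a⁻¹ ⊗[k] H (a * b)) →ₗ[k] (H a ⊗[k] H b) :=
  LinearMap.mul' k (H a ⊗[k] H b) ∘ₗ
    TensorProduct.map
      (LinearMap.mulRight k (T.IL a b) ∘ₗ (T.Δ a b).toLinearMap)
      ((TensorProduct.mk k (H a) (H b)).flip 1 ∘ₗ (T.S a).symm.toLinearMap) ∘ₗ
    (TensorProduct.comm k (H a⁻¹) (H (a * b))).toLinearMap

/-- the map `x ⊗ y ↦ (S_{α⁻¹}(x) ⊗ 1_β) ⬝ J^L_{α,β} ⬝ Δ_{α,β}(y)` -/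
noncomputable def lmapJL (a b : π) : (H a⁻¹ ⊗[k] H (a * b)) →ₗ[k] (H a ⊗[k] H b) :=
  LinearMap.mul' k (H a ⊗[k] H b) ∘ₗ
    TensorProduct.map
      ((TensorProduct.mk k (H a) (H b)).flip 1 ∘ₗ
        castL k H (inv_inv a) ∘ₗ (T.S a⁻¹).toLinearMap)
      (LinearMap.mulLeft k (T.JL a b) ∘ₗ (T.Δ a b).toLinearMap)

end QuasiHopfGCoalgebra
end QH

/-! With `X = Φ_{αβ,β⁻¹,β}` one has `S(J²) = S(X²) p X³`, so the left-hand side is the image of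
`(Δ_{α,β} ⊗ id ⊗ id)(X)` under `x¹ ⊗ x² ⊗ x³ ⊗ x⁴ ↦ (x¹ ⊗ x²) I^R (1 ⊗ S(x³) p x⁴)`. The pentagon
identity writes `(Δ ⊗ id ⊗ id)(X)` as `(id ⊗ id ⊗ Δ)(Φ⁻¹) (1 ⊗ Φ) (id ⊗ Δ ⊗ id)(Φ) (Φ ⊗ 1)`, and
the factors are absorbed from the right: `Φ ⊗ 1` cancels the `Φ⁻¹` inside `I^R`, leaving `1 ⊗ q`;
`(id ⊗ Δ ⊗ id)(Φ)` disappears by the `q`-antipode axiom and `(id ⊗ ε ⊗ id)(Φ) = 1`; finally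
`1 ⊗ Φ`, the `p`-antipode axiom and `Y¹ q S(Y²) p Y³ = 1` reduce what is left to
`(id ⊗ id ⊗ ε)(Φ⁻¹)`, which is `1` by the pentagon identity with two arguments equal to `1`.
-/

section Cast
variable {k : Type u} [Field k] {π : Type v}
variable {H : π → Type u} [∀ a, Ring (H a)] [∀ a, Algebra k (H a)]

@[simp]
theorem castL_rfl {a : π} : castL k H (rfl : a = a) = LinearMap.id := rfl

theorem castL_castL {a b c : π} (e : a = b) (f : b = c) (x : H a) :
    castL k H f (castL k H e x) = castL k H (e.trans f) x := by
  subst e f; rfl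

@[simp]
theorem castL_mul {a b : π} (e : a = b) (x y : H a) :
    castL k H e (x * y) = castL k H e x * castL k H e y := by
  subst e; rfl

@[simp]
theorem castL_one {a b : π} (e : a = b) : castL k H e (1 : H a) = 1 := by
  subst e; rfl

theorem castA_apply {a b : π} (e : a = b) (x : H a) : castA k H e x = castL k H e x := by
  subst e; rfl

end Cast

theorem TensorProduct.induction_on₃ {R M N P : Type*} [CommSemiring R] [AddCommMonoid M]
    [AddCommMonoid N] [AddCommMonoid P] [Module R M] [Module R N] [Module R P]
    {motive : M ⊗[R] (N ⊗[R] P) → Prop} (x : M ⊗[R] (N ⊗[R] P)) (zero : motive 0)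
    (tmul : ∀ m n p, motive (m ⊗ₜ (n ⊗ₜ p)))
    (add : ∀ x y, motive x → motive y → motive (x + y)) : motive x := by
  induction x using TensorProduct.induction_on with
  | zero => exact zero
  | tmul m t =>
    induction t using TensorProduct.induction_on with
    | zero => simpa using zero
    | tmul n p => exact tmul m n p
    | add t t' ht ht' => simpa [tmul_add] using add _ _ ht ht'
  | add x y hx hy => exact add x y hx hy

/- Ring lemmas such as `mul_add` do not unify with the multiplication of a fourfold tensor
product of algebras, so products there are first split along the leftmost factor. -/
theorem Algebra.TensorProduct.tmul_mul_map {R A B M N : Type*} [CommSemiring R] [Semiring A]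
    [Semiring B] [Algebra R A] [Algebra R B] [AddCommMonoid M] [AddCommMonoid N] [Module R M]
    [Module R N] (a : A) (b : B) (f : M →ₗ[R] A) (g : N →ₗ[R] B) (z : M ⊗[R] N) :
    (a ⊗ₜ b) * _root_.TensorProduct.map f g z =
      _root_.TensorProduct.map (LinearMap.mulLeft R a ∘ₗ f) (LinearMap.mulLeft R b ∘ₗ g) z := by
  induction z using TensorProduct.induction_on with
  | zero => simp
  | tmul m n => simp
  | add z z' hz hz' => simp [mul_add, hz, hz']

namespace QuasiHopfGCoalgebra

variable {k : Type u} [Field k] {π : Type v} [Group π]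
variable {H : π → Type u} [∀ a, Ring (H a)] [∀ a, Algebra k (H a)]
variable (T : QuasiHopfGCoalgebra k H)

@[simp]
theorem castL_p {a b : π} (e : a = b) : castL k H e (T.p a) = T.p b := by
  subst e; rfl

theorem rid_counit_comul (a : π) (z : H (a * 1)) :
    TensorProduct.rid k (H a) (map LinearMap.id (T.ε : H 1 →ₗ[k] k) (T.Δ a 1 z)) =
      castL k H (mul_one a) z := by
  simpa [castL_castL] using T.counit_right a (castL k H (mul_one a) z)

theorem lid_counit_comul (a : π) (z : H (1 * a)) :
    TensorProduct.lid k (H a) (map (T.ε : H 1 →ₗ[k] k) LinearMap.id (T.Δ 1 a z)) =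
      castL k H (one_mul a) z := by
  simpa [castL_castL] using T.counit_left a (castL k H (one_mul a) z)

theorem Φ_cast_mid (a c : π) {g g' : π} (e : g = g') :
    map LinearMap.id (map (castL k H e) LinearMap.id) (T.Φ a g c) = T.Φ a g' c := by
  subst e
  simp [map_id]

theorem Φ_cast_right (a b : π) {g g' : π} (e : g = g') :
    map LinearMap.id (map LinearMap.id (castL k H e)) (T.Φ a b g) = T.Φ a b g' := by
  subst e
  simp [map_id]

theorem Φ_normal_of_eq (a d : π) {g : π} (e : g = 1) :
    map LinearMap.id ((TensorProduct.lid k (H d)).toLinearMap ∘ₗ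
      map ((T.ε : H 1 →ₗ[k] k) ∘ₗ castL k H e) LinearMap.id) (T.Φ a g d) = 1 := by
  subst e
  exact T.Φ_normal a d

noncomputable def counitMid (a d : π) : H a ⊗[k] (H 1 ⊗[k] H d) →ₐ[k] H a ⊗[k] H d :=
  Algebra.TensorProduct.map (AlgHom.id k (H a))
    ((Algebra.TensorProduct.lid k (H d)).toAlgHom.comp
      (Algebra.TensorProduct.map T.ε (AlgHom.id k (H d))))

@[simp]
theorem counitMid_tmul (a d : π) (x : H a) (t : H 1 ⊗[k] H d) :
    T.counitMid a d (x ⊗ₜ t) =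
      x ⊗ₜ TensorProduct.lid k (H d) (map (T.ε : H 1 →ₗ[k] k) LinearMap.id t) := by
  induction t using TensorProduct.induction_on with
  | zero => simp
  | tmul y z => simp [counitMid]
  | add t t' ht ht' => simp_all [tmul_add]

theorem counitMid_Φ (a d : π) : T.counitMid a d (T.Φ a 1 d) = 1 := by
  have h : (T.counitMid a d).toLinearMap = map LinearMap.id
      ((TensorProduct.lid k (H d)).toLinearMap ∘ₗ
        map (T.ε : H 1 →ₗ[k] k) LinearMap.id) := by
    ext x y z
    simp
  exact (LinearMap.congr_fun h _).trans (T.Φ_normal a d)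

theorem counitMid_assoc_tmul (b d : π) (t : H b ⊗[k] H 1) (z : H d) :
    T.counitMid b d (TensorProduct.assoc k (H b) (H 1) (H d) (t ⊗ₜ z)) =
      TensorProduct.rid k (H b) (map LinearMap.id (T.ε : H 1 →ₗ[k] k) t) ⊗ₜ z := by
  induction t using TensorProduct.induction_on with
  | zero => simp
  | tmul x y => simp [TensorProduct.smul_tmul']
  | add t t' ht ht' => simp [add_tmul, ht, ht']

noncomputable def counitRight (a b : π) {c : π} (e : c = 1) :
    H a ⊗[k] (H b ⊗[k] H c) →ₐ[k] H a ⊗[k] H b :=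
  Algebra.TensorProduct.map (AlgHom.id k (H a))
    ((Algebra.TensorProduct.rid k k (H b)).toAlgHom.comp
      (Algebra.TensorProduct.map (AlgHom.id k (H b)) (T.ε.comp (castA k H e))))

@[simp]
theorem counitRight_tmul (a b : π) {c : π} (e : c = 1) (x : H a) (y : H b) (z : H c) :
    T.counitRight a b e (x ⊗ₜ (y ⊗ₜ z)) = T.ε (castL k H e z) • (x ⊗ₜ y) := by
  simp [counitRight, castA_apply, TensorProduct.tmul_smul]

noncomputable def counitThird (a b d : π) :
    H a ⊗[k] (H b ⊗[k] (H 1 ⊗[k] H d)) →ₐ[k] H a ⊗[k] (H b ⊗[k] H d) :=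
  Algebra.TensorProduct.map (AlgHom.id k (H a)) (T.counitMid b d)

@[simp]
theorem counitThird_tmul (a b d : π) (x : H a) (s : H b ⊗[k] (H 1 ⊗[k] H d)) :
    T.counitThird a b d (x ⊗ₜ s) = x ⊗ₜ T.counitMid b d s := by
  simp [counitThird]

theorem counitThird_one_tmul_Φ (a b d : π) :
    T.counitThird a b d ((1 : H a) ⊗ₜ[k] T.Φ b 1 d) = 1 := by
  simp [counitMid_Φ, Algebra.TensorProduct.one_def]

theorem counitThird_map_comul_mid (a b d : π) (X : H a ⊗[k] (H (b * 1) ⊗[k] H d)) :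
    T.counitThird a b d (map LinearMap.id ((TensorProduct.assoc k (H b) (H 1) (H d)).toLinearMap ∘ₗ
      map (T.Δ b 1).toLinearMap LinearMap.id) X) =
      map LinearMap.id (map (castL k H (mul_one b)) LinearMap.id) X := by
  suffices key : (T.counitThird a b d).toLinearMap ∘ₗ
      map LinearMap.id ((TensorProduct.assoc k (H b) (H 1) (H d)).toLinearMap ∘ₗ
        map (T.Δ b 1).toLinearMap LinearMap.id) =
      map LinearMap.id (map (castL k H (mul_one b)) LinearMap.id) from congr($key X)
  ext x y z
  simp [counitMid_assoc_tmul, rid_counit_comul]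

theorem counitThird_map_comul_right (a b d : π) (X : H a ⊗[k] (H b ⊗[k] H (1 * d))) :
    T.counitThird a b d (map LinearMap.id (map LinearMap.id (T.Δ 1 d).toLinearMap) X) =
      map LinearMap.id (map LinearMap.id (castL k H (one_mul d))) X := by
  suffices key : (T.counitThird a b d).toLinearMap ∘ₗ
      map LinearMap.id (map LinearMap.id (T.Δ 1 d).toLinearMap) =
      map LinearMap.id (map LinearMap.id (castL k H (one_mul d))) from congr($key X)
  ext x y z
  simp [lid_counit_comul]

theorem counitThird_assoc_tmul (a b d : π) (t : H a ⊗[k] H b) (s : H 1 ⊗[k] H d) :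
    T.counitThird a b d (TensorProduct.assoc k (H a) (H b) (H 1 ⊗[k] H d) (t ⊗ₜ s)) =
      TensorProduct.assoc k (H a) (H b) (H d)
        (t ⊗ₜ TensorProduct.lid k (H d) (map (T.ε : H 1 →ₗ[k] k) LinearMap.id s)) := by
  induction t using TensorProduct.induction_on with
  | zero => simp
  | tmul x y => simp
  | add t t' ht ht' => simp_all [add_tmul]

theorem counitThird_assoc_map_comul_Φ (a b d : π) :
    T.counitThird a b d (TensorProduct.assoc k (H a) (H b) (H 1 ⊗[k] H d)
      (map (T.Δ a b).toLinearMap LinearMap.id (T.Φ (a * b) 1 d))) = 1 := by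
  have key : (T.counitThird a b d).toLinearMap ∘ₗ
      (TensorProduct.assoc k (H a) (H b) (H 1 ⊗[k] H d)).toLinearMap ∘ₗ
        map (T.Δ a b).toLinearMap LinearMap.id =
      (TensorProduct.assoc k (H a) (H b) (H d)).toLinearMap ∘ₗ
        map (T.Δ a b).toLinearMap LinearMap.id ∘ₗ (T.counitMid (a * b) d).toLinearMap := by
    ext x y z
    simp [counitThird_assoc_tmul]
  refine congr($key _).trans ?_
  simp [counitMid_Φ, Algebra.TensorProduct.one_def]

theorem counitThird_assoc_tmul_one (a b : π) (Y : H a ⊗[k] (H b ⊗[k] H 1)) :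
    T.counitThird a b 1 (map LinearMap.id (TensorProduct.assoc k (H b) (H 1) (H 1)).toLinearMap
      (TensorProduct.assoc k (H a) (H b ⊗[k] H 1) (H 1) (Y ⊗ₜ[k] (1 : H 1)))) =
      Algebra.TensorProduct.map (AlgHom.id k (H a)) Algebra.TensorProduct.includeLeft
        (T.counitRight a b rfl Y) := by
  suffices key : (T.counitThird a b 1).toLinearMap ∘ₗ
      map LinearMap.id (TensorProduct.assoc k (H b) (H 1) (H 1)).toLinearMap ∘ₗ
      (TensorProduct.assoc k (H a) (H b ⊗[k] H 1) (H 1)).toLinearMap ∘ₗ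
      (TensorProduct.mk k _ (H 1)).flip 1 =
      (Algebra.TensorProduct.map (AlgHom.id k (H a))
        Algebra.TensorProduct.includeLeft).toLinearMap ∘ₗ (T.counitRight a b rfl).toLinearMap
    from congr($key Y)
  ext x y z
  simp [TensorProduct.tmul_smul]

-- `id ⊗ id ⊗ ε ⊗ id` maps the pentagon at `(a, b, 1, 1)` to `Φ ((id ⊗ id ⊗ ε)(Φ) ⊗ 1) = Φ`.
theorem counitRight_Φ (a b : π) : T.counitRight a b rfl (T.Φ a b 1) = 1 := by
  have hpent := congr(T.counitThird a b 1 $(T.pentagon a b 1 1))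
  simp only [map_mul, counitThird_one_tmul_Φ, counitThird_map_comul_mid, Φ_cast_mid,
    counitThird_assoc_tmul_one, counitThird_map_comul_right, Φ_cast_right,
    counitThird_assoc_map_comul_Φ, one_mul, mul_one] at hpent
  set ι : H a ⊗[k] H b →ₐ[k] H a ⊗[k] (H b ⊗[k] H 1) :=
    Algebra.TensorProduct.map (AlgHom.id k (H a)) Algebra.TensorProduct.includeLeft
  have hι : ι (T.counitRight a b rfl (T.Φ a b 1)) = 1 := by
    calc _ = T.Φinv a b 1 * (T.Φ a b 1 * ι (T.counitRight a b rfl (T.Φ a b 1))) := by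
          rw [← mul_assoc, T.Φinv_mul_Φ, one_mul]
      _ = 1 := by rw [hpent, T.Φinv_mul_Φ]
  have hret : ∀ t, T.counitRight a b rfl (ι t) = t := by
    intro t
    induction t using TensorProduct.induction_on with
    | zero => simp
    | tmul x y => simp [ι]
    | add t t' ht ht' => simp_all
  rw [← hret (T.counitRight a b rfl _), hι, map_one]

theorem counitRight_Φinv (a b : π) {c : π} (e : c = 1) :
    T.counitRight a b e (T.Φinv a b c) = 1 := by
  subst e
  calc _ = T.counitRight a b rfl (T.Φinv a b 1) * T.counitRight a b rfl (T.Φ a b 1) := by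
        rw [counitRight_Φ, mul_one]
    _ = 1 := by rw [← map_mul, T.Φinv_mul_Φ, map_one]

theorem assoc_map_comul_Φ (a b c d : π) :
    TensorProduct.assoc k (H a) (H b) (H c ⊗[k] H d)
        (map (T.Δ a b).toLinearMap LinearMap.id (T.Φ (a * b) c d)) =
      map LinearMap.id (map LinearMap.id (T.Δ c d).toLinearMap) (T.Φinv a b (c * d)) *
        (((1 : H a) ⊗ₜ[k] T.Φ b c d) *
          map LinearMap.id ((TensorProduct.assoc k (H b) (H c) (H d)).toLinearMap ∘ₗ
            map (T.Δ b c).toLinearMap LinearMap.id) (T.Φ a (b * c) d) *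
          map LinearMap.id (TensorProduct.assoc k (H b) (H c) (H d)).toLinearMap
            (TensorProduct.assoc k (H a) (H b ⊗[k] H c) (H d) (T.Φ a b c ⊗ₜ[k] (1 : H d)))) := by
  let f := Algebra.TensorProduct.map (AlgHom.id k (H a))
    (Algebra.TensorProduct.map (AlgHom.id k (H b)) (T.Δ c d))
  have hf : ∀ x, map LinearMap.id (map LinearMap.id (T.Δ c d).toLinearMap) x = f x :=
    fun _ => rfl
  rw [T.pentagon, hf, hf, ← mul_assoc (f _), ← map_mul, T.Φinv_mul_Φ, map_one, one_mul]

noncomputable def qS (a : π) : H a ⊗[k] H a⁻¹ →ₗ[k] H a :=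
  LinearMap.mul' k (H a) ∘ₗ
    map (LinearMap.mulRight k (T.q a)) (castL k H (inv_inv a) ∘ₗ (T.S a⁻¹).toLinearMap)

@[simp]
theorem qS_tmul (a : π) (x : H a) (y : H a⁻¹) :
    T.qS a (x ⊗ₜ y) = x * T.q a * castL k H (inv_inv a) (T.S a⁻¹ y) := by
  simp [qS]

theorem qS_comul (a : π) (z : H (a * a⁻¹)) :
    T.qS a (T.Δ a a⁻¹ z) = T.ε (castL k H (mul_inv_cancel a) z) • T.q a := by
  simpa [qS, castL_castL] using T.antipode_q a (castL k H (mul_inv_cancel a) z)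

theorem IR_eq_map_qS (a b : π) : T.IR a b = map LinearMap.id (T.qS b) (T.Φinv a b b⁻¹) := rfl

theorem map_qS_tmul_mul (a b : π) (v₁ : H a) (v₂ : H b) (v₃ : H b⁻¹)
    (F : H a ⊗[k] (H b ⊗[k] H b⁻¹)) :
    map LinearMap.id (T.qS b) ((v₁ ⊗ₜ (v₂ ⊗ₜ v₃)) * F) =
      (v₁ ⊗ₜ v₂) * map LinearMap.id (T.qS b) F *
        ((1 : H a) ⊗ₜ castL k H (inv_inv b) (T.S b⁻¹ v₃)) := by
  induction F using TensorProduct.induction_on₃ with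
  | zero => simp
  | tmul x y z => simp [T.S_mul, mul_assoc]
  | add F F' hF hF' => simp [mul_add, add_mul, hF, hF']

theorem map_qS_one (a b : π) : map LinearMap.id (T.qS b) 1 = (1 : H a) ⊗ₜ T.q b := by
  simp [Algebra.TensorProduct.one_def, T.S_one]

noncomputable def Sp (a : π) : H a ⊗[k] H a⁻¹ →ₗ[k] H a⁻¹ :=
  LinearMap.mul' k (H a⁻¹) ∘ₗ
    map (LinearMap.mulRight k (T.p a⁻¹) ∘ₗ (T.S a).toLinearMap) LinearMap.id

@[simp]
theorem Sp_tmul (a : π) (x : H a) (y : H a⁻¹) : T.Sp a (x ⊗ₜ y) = T.S a x * T.p a⁻¹ * y := by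
  simp [Sp]

theorem Sp_comul (a : π) (z : H (a * a⁻¹)) :
    T.Sp a (T.Δ a a⁻¹ z) = T.ε (castL k H (mul_inv_cancel a) z) • T.p a⁻¹ := by
  simpa [Sp, castL_castL] using T.antipode_p a (castL k H (mul_inv_cancel a) z)

theorem Sp_mul_tmul (a : π) (t : H a ⊗[k] H a⁻¹) (x : H a) (y : H a⁻¹) :
    T.Sp a (t * (x ⊗ₜ y)) = T.S a x * T.Sp a t * y := by
  induction t using TensorProduct.induction_on with
  | zero => simp
  | tmul t₁ t₂ => simp [T.S_mul, mul_assoc]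
  | add t t' ht ht' => simp [add_mul, mul_add, ht, ht']

noncomputable def qSp (b : π) : H b ⊗[k] (H b⁻¹ ⊗[k] H b⁻¹⁻¹) →ₗ[k] H b :=
  LinearMap.mul' k (H b) ∘ₗ
    map (LinearMap.mulRight k (T.q b)) (castL k H (inv_inv b) ∘ₗ T.Sp b⁻¹)

@[simp]
theorem qSp_tmul (b : π) (x : H b) (y : H b⁻¹) (z : H b⁻¹⁻¹) :
    T.qSp b (x ⊗ₜ (y ⊗ₜ z)) =
      x * T.q b * castL k H (inv_inv b) (T.S b⁻¹ y * T.p b⁻¹⁻¹ * z) := by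
  simp [qSp]

theorem qSp_Φ (b : π) : T.qSp b (T.Φ b b⁻¹ b⁻¹⁻¹) = 1 := by
  have key : T.qSp b = (LinearMap.mul' k (H b) ∘ₗ
      map (LinearMap.mulRight k (T.q b))
        (LinearMap.mul' k (H b) ∘ₗ
          map (LinearMap.mulRight k (T.p b) ∘ₗ castL k H (inv_inv b) ∘ₗ (T.S b⁻¹).toLinearMap)
            LinearMap.id)) ∘ₗ map LinearMap.id (map LinearMap.id (castL k H (inv_inv b))) := by
    ext x y z
    simp [mul_assoc]
  rw [key, LinearMap.comp_apply, Φ_cast_right, T.antipode_Φ]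

noncomputable def sandwichSp (a b : π) (w : H a ⊗[k] H b) :
    H a ⊗[k] (H b ⊗[k] (H b⁻¹ ⊗[k] H b⁻¹⁻¹)) →ₗ[k] H a ⊗[k] H b :=
  LinearMap.mul' k (H a ⊗[k] H b) ∘ₗ
    map (LinearMap.mulRight k w)
      (TensorProduct.mk k (H a) (H b) 1 ∘ₗ castL k H (inv_inv b) ∘ₗ T.Sp b⁻¹) ∘ₗ
    (TensorProduct.assoc k (H a) (H b) (H b⁻¹ ⊗[k] H b⁻¹⁻¹)).symm.toLinearMap

theorem sandwichSp_assoc_tmul (a b : π) (w t : H a ⊗[k] H b) (s : H b⁻¹ ⊗[k] H b⁻¹⁻¹) :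
    T.sandwichSp a b w (TensorProduct.assoc k (H a) (H b) (H b⁻¹ ⊗[k] H b⁻¹⁻¹) (t ⊗ₜ s)) =
      t * w * ((1 : H a) ⊗ₜ castL k H (inv_inv b) (T.Sp b⁻¹ s)) := by
  simp [sandwichSp]

@[simp]
theorem sandwichSp_tmul (a b : π) (w : H a ⊗[k] H b) (x : H a) (y : H b)
    (s : H b⁻¹ ⊗[k] H b⁻¹⁻¹) :
    T.sandwichSp a b w (x ⊗ₜ (y ⊗ₜ s)) =
      (x ⊗ₜ y) * w * ((1 : H a) ⊗ₜ castL k H (inv_inv b) (T.Sp b⁻¹ s)) :=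
  T.sandwichSp_assoc_tmul a b w (x ⊗ₜ y) s

theorem lmapIR_JR_eq_sandwichSp (a b : π) :
    T.lmapIR a b (T.JR (a * b) b⁻¹) =
      T.sandwichSp a b (T.IR a b) (TensorProduct.assoc k (H a) (H b) (H b⁻¹ ⊗[k] H b⁻¹⁻¹)
        (map (T.Δ a b).toLinearMap LinearMap.id (T.Φ (a * b) b⁻¹ b⁻¹⁻¹))) := by
  have key : T.lmapIR a b ∘ₗ map LinearMap.id
      (LinearMap.mul' k (H b⁻¹) ∘ₗ
        map ((T.S b⁻¹).symm.toLinearMap ∘ₗ LinearMap.mulLeft k (T.p b⁻¹⁻¹)) LinearMap.id ∘ₗ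
        (TensorProduct.comm k (H b⁻¹) (H b⁻¹⁻¹)).toLinearMap) =
      T.sandwichSp a b (T.IR a b) ∘ₗ
        (TensorProduct.assoc k (H a) (H b) (H b⁻¹ ⊗[k] H b⁻¹⁻¹)).toLinearMap ∘ₗ
        map (T.Δ a b).toLinearMap LinearMap.id := by
    ext x y z
    simp [lmapIR, sandwichSp_assoc_tmul, T.S_mul, mul_assoc]
  exact congr($key (T.Φ (a * b) b⁻¹ b⁻¹⁻¹))

theorem sandwichSp_map_qS_mul (a b : π) (v F : H a ⊗[k] (H b ⊗[k] H b⁻¹))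
    (u : H a ⊗[k] (H b ⊗[k] (H b⁻¹ ⊗[k] H b⁻¹⁻¹))) :
    T.sandwichSp a b (map LinearMap.id (T.qS b) F)
        (u * map LinearMap.id (TensorProduct.assoc k (H b) (H b⁻¹) (H b⁻¹⁻¹)).toLinearMap
          (TensorProduct.assoc k (H a) (H b ⊗[k] H b⁻¹) (H b⁻¹⁻¹) (v ⊗ₜ (1 : H b⁻¹⁻¹)))) =
      T.sandwichSp a b (map LinearMap.id (T.qS b) (v * F)) u := by
  suffices key : T.sandwichSp a b (map LinearMap.id (T.qS b) F) ∘ₗ LinearMap.mulRight k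
      (map LinearMap.id (TensorProduct.assoc k (H b) (H b⁻¹) (H b⁻¹⁻¹)).toLinearMap
          (TensorProduct.assoc k (H a) (H b ⊗[k] H b⁻¹) (H b⁻¹⁻¹) (v ⊗ₜ (1 : H b⁻¹⁻¹)))) =
      T.sandwichSp a b (map LinearMap.id (T.qS b) (v * F)) from congr($key u)
  ext u₁ u₂ u₃ u₄
  induction v using TensorProduct.induction_on₃ with
  | zero => simp
  | tmul v₁ v₂ v₃ =>
    simp only [assoc_tmul, map_tmul, LinearMap.id_coe, id_eq, LinearEquiv.coe_coe,
      AlgebraTensorModule.curry_apply, LinearMap.restrictScalars_self, curry_apply,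
      LinearMap.coe_comp, Function.comp_apply, LinearMap.mulRight_apply,
      Algebra.TensorProduct.tmul_mul_tmul, mul_one, sandwichSp_tmul, Sp_tmul, T.S_mul, castL_mul,
      map_qS_tmul_mul]
    rw [← Algebra.TensorProduct.tmul_mul_tmul]
    simp only [← Algebra.TensorProduct.includeRight_apply, map_mul, mul_assoc]
  | add v v' hv hv' => simp_all [add_tmul, mul_add, add_mul]

theorem sandwichSp_tmul_mul_assoc (a b : π) (x : H a) (u₂ : H b) (u₃ : H b⁻¹)
    (u₄ : H b⁻¹⁻¹) (t : H b ⊗[k] H b⁻¹) (z : H b⁻¹⁻¹) :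
    T.sandwichSp a b ((1 : H a) ⊗ₜ T.q b)
        (x ⊗ₜ ((u₂ ⊗ₜ (u₃ ⊗ₜ u₄)) * TensorProduct.assoc k (H b) (H b⁻¹) (H b⁻¹⁻¹) (t ⊗ₜ z))) =
      x ⊗ₜ (u₂ * T.qS b t * castL k H (inv_inv b) (T.Sp b⁻¹ (u₃ ⊗ₜ u₄) * z)) := by
  induction t using TensorProduct.induction_on with
  | zero => simp
  | tmul t₁ t₂ => simp [T.S_mul, mul_assoc]
  | add t t' ht ht' => simp_all [add_tmul, tmul_add, mul_add, add_mul]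

theorem sandwichSp_mul_map_comul_mid (a b : π)
    (u : H a ⊗[k] (H b ⊗[k] (H b⁻¹ ⊗[k] H b⁻¹⁻¹))) (z : H a ⊗[k] (H (b * b⁻¹) ⊗[k] H b⁻¹⁻¹)) :
    T.sandwichSp a b ((1 : H a) ⊗ₜ T.q b)
        (u * map LinearMap.id ((TensorProduct.assoc k (H b) (H b⁻¹) (H b⁻¹⁻¹)).toLinearMap ∘ₗ
          map (T.Δ b b⁻¹).toLinearMap LinearMap.id) z) =
      T.sandwichSp a b ((1 : H a) ⊗ₜ T.q b) u *
        map LinearMap.id (castL k H (inv_inv b))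
          (map LinearMap.id ((TensorProduct.lid k (H b⁻¹⁻¹)).toLinearMap ∘ₗ
            map ((T.ε : H 1 →ₗ[k] k) ∘ₗ castL k H (mul_inv_cancel b)) LinearMap.id) z) := by
  suffices key : T.sandwichSp a b ((1 : H a) ⊗ₜ T.q b) ∘ₗ LinearMap.mulRight k
      (map LinearMap.id ((TensorProduct.assoc k (H b) (H b⁻¹) (H b⁻¹⁻¹)).toLinearMap ∘ₗ
          map (T.Δ b b⁻¹).toLinearMap LinearMap.id) z) =
      LinearMap.mulRight k (map LinearMap.id (castL k H (inv_inv b))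
          (map LinearMap.id ((TensorProduct.lid k (H b⁻¹⁻¹)).toLinearMap ∘ₗ
            map ((T.ε : H 1 →ₗ[k] k) ∘ₗ castL k H (mul_inv_cancel b)) LinearMap.id) z)) ∘ₗ
        T.sandwichSp a b ((1 : H a) ⊗ₜ T.q b) from congr($key u)
  refine TensorProduct.ext' fun x U => ?_
  simp only [LinearMap.comp_apply, LinearMap.mulRight_apply, Algebra.TensorProduct.tmul_mul_map]
  induction z using TensorProduct.induction_on₃ with
  | zero => simp
  | tmul z₁ z₂ z₃ =>
    induction U using TensorProduct.induction_on₃ with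
    | zero => simp
    | tmul u₂ u₃ u₄ => simp [sandwichSp_tmul_mul_assoc, qS_comul, mul_assoc]
    | add U U' hU hU' => simp_all [add_mul, tmul_add]
  | add z z' hz hz' => simp_all [mul_add]

theorem sandwichSp_tmul_tmul_comul_mul (a b : π) (x : H a) (y : H b) (z : H (b⁻¹ * b⁻¹⁻¹))
    (Y : H b ⊗[k] (H b⁻¹ ⊗[k] H b⁻¹⁻¹)) :
    T.sandwichSp a b ((1 : H a) ⊗ₜ T.q b) (x ⊗ₜ ((y ⊗ₜ T.Δ b⁻¹ b⁻¹⁻¹ z) * Y)) =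
      T.ε (castL k H (mul_inv_cancel b⁻¹) z) • x ⊗ₜ (y * T.qSp b Y) := by
  induction Y using TensorProduct.induction_on₃ with
  | zero => simp
  | tmul y₁ y₂ y₃ => simp [Sp_mul_tmul, Sp_comul, mul_assoc]
  | add Y Y' hY hY' => simp_all [mul_add, tmul_add]

theorem sandwichSp_map_comul_right_mul (a b : π) (x : H a ⊗[k] (H b ⊗[k] H (b⁻¹ * b⁻¹⁻¹))) :
    T.sandwichSp a b ((1 : H a) ⊗ₜ T.q b)
        (map LinearMap.id (map LinearMap.id (T.Δ b⁻¹ b⁻¹⁻¹).toLinearMap) x *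
          ((1 : H a) ⊗ₜ[k] T.Φ b b⁻¹ b⁻¹⁻¹)) =
      T.counitRight a b (mul_inv_cancel b⁻¹) x := by
  suffices key : T.sandwichSp a b ((1 : H a) ⊗ₜ T.q b) ∘ₗ
      LinearMap.mulRight k ((1 : H a) ⊗ₜ[k] T.Φ b b⁻¹ b⁻¹⁻¹) ∘ₗ
      map LinearMap.id (map LinearMap.id (T.Δ b⁻¹ b⁻¹⁻¹).toLinearMap) =
      (T.counitRight a b (mul_inv_cancel b⁻¹)).toLinearMap from congr($key x)
  ext x y z
  simp [sandwichSp_tmul_tmul_comul_mul, qSp_Φ]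

end QuasiHopfGCoalgebra

section Statements
variable {k : Type u} [Field k] {π : Type v} [Group π]
variable {H : π → Type u} [∀ a, Ring (H a)] [∀ a, Algebra k (H a)]

/-- Writing `J¹_{αβ} ⊗ J²_{β⁻¹} = J^R_{αβ,β⁻¹}`:
`Δ_{α,β}(J¹_{αβ}) ⬝ I^R_{α,β} ⬝ (1_α ⊗ S_{β⁻¹}(J²_{β⁻¹})) = 1_α ⊗ 1_β`. -/
theorem IR_JR (T : QuasiHopfGCoalgebra k H) (a b : π) :
    T.lmapIR a b (T.JR (a * b) b⁻¹) = 1 := by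
  rw [T.lmapIR_JR_eq_sandwichSp, T.assoc_map_comul_Φ]
  simp only [← mul_assoc (G := H a ⊗[k] (H b ⊗[k] (H b⁻¹ ⊗[k] H b⁻¹⁻¹)))]
  rw [T.IR_eq_map_qS, T.sandwichSp_map_qS_mul, T.Φ_mul_Φinv, T.map_qS_one,
    T.sandwichSp_mul_map_comul_mid, T.Φ_normal_of_eq]
  have hcast : map LinearMap.id (castL k H (inv_inv b)) (1 : H a ⊗[k] H b⁻¹⁻¹) = 1 := by
    simp [Algebra.TensorProduct.one_def]
  rw [hcast, mul_one, T.sandwichSp_map_comul_right_mul, T.counitRight_Φinv]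

end Statements
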